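/- arXiv:2205.04637 — 2 statements merged into one kernel-verified Lean document; each statement's English description precedes it below -/
import Mathlib

section
/- Let μ be a probability measure on ℝᵈ (with the ℓ¹ metric) with finite first moments and let a ∈ {1,…,d}. Then the infimum of ∫ y_a dν over all probability measures ν on ℝᵈ with W₁(μ, ν) ≤ δ equals (∫ y_a dμ) − δ. -/
open MeasureTheory Finset

/-- ℓ¹ distance on ℝᵈ. -/
noncomputable def l1dist {d : ℕ} (y y' : Fin d → ℝ) : ℝ := ∑ a, |y a - y' a|

/-- 1-Wasserstein distance w.r.t. a ground cost `c`: infimum over couplings of the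
expected cost. -/
noncomputable def W1 {E : Type*} [MeasurableSpace E] (c : E → E → ℝ)
    (μ ν : Measure E) : ℝ :=
  sInf {r : ℝ | ∃ π : Measure (E × E), IsProbabilityMeasure π ∧
    π.map Prod.fst = μ ∧ π.map Prod.snd = ν ∧ ∫ p, c p.1 p.2 ∂π = r}

/-!
Shifting `μ` by `δ` in coordinate `a` costs exactly `δ` in the ℓ¹ metric and lowers the mean of
`y a` by `δ`, so `(∫ y a ∂μ) - δ` is attained. Conversely `y ↦ y a` is 1-Lipschitz for the ℓ¹
metric, so under any coupling `π` of `μ` and `ν` the gap `∫ y a ∂μ - ∫ y a ∂ν` is at most the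
expected ℓ¹ cost; taking the infimum over couplings bounds it by `W1 l1dist μ ν ≤ δ`.
-/

section Wasserstein

variable {E : Type*} [MeasurableSpace E] {c : E → E → ℝ} {μ ν : Measure E}

theorem W1_le_integral (hc : ∀ x y, 0 ≤ c x y) {π : Measure (E × E)} [IsProbabilityMeasure π]
    (hπ₁ : π.map Prod.fst = μ) (hπ₂ : π.map Prod.snd = ν) :
    W1 c μ ν ≤ ∫ p, c p.1 p.2 ∂π := by
  refine csInf_le ⟨0, ?_⟩ ⟨π, inferInstance, hπ₁, hπ₂, rfl⟩
  rintro r ⟨π', -, -, -, rfl⟩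
  exact integral_nonneg fun p => hc p.1 p.2

theorem W1_map_le (hc : ∀ x y, 0 ≤ c x y) (hc_meas : Measurable (Function.uncurry c))
    [IsProbabilityMeasure μ] {T : E → E} (hT : Measurable T) :
    W1 c μ (μ.map T) ≤ ∫ x, c x (T x) ∂μ := by
  have hgraph : Measurable fun x => (x, T x) := measurable_id.prodMk hT
  have hprob := Measure.isProbabilityMeasure_map (μ := μ) hgraph.aemeasurable
  calc W1 c μ (μ.map T) ≤ ∫ p, c p.1 p.2 ∂μ.map fun x => (x, T x) :=
        W1_le_integral hc ((Measure.fst_map_prodMk (X := id) hT).trans Measure.map_id)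
          (Measure.snd_map_prodMk measurable_id)
    _ = ∫ x, c x (T x) ∂μ := integral_map hgraph.aemeasurable hc_meas.aestronglyMeasurable

theorem integral_sub_integral_le_W1 [IsProbabilityMeasure μ] [IsProbabilityMeasure ν]
    {f : E → ℝ} (hfμ : Integrable f μ) (hfν : Integrable f ν) (hfc : ∀ x y, f x - f y ≤ c x y)
    (hc_int : ∀ π : Measure (E × E), π.map Prod.fst = μ → π.map Prod.snd = ν →
      Integrable (fun p => c p.1 p.2) π) :
    (∫ x, f x ∂μ) - ∫ x, f x ∂ν ≤ W1 c μ ν := by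
  refine le_csInf ⟨_, μ.prod ν, inferInstance, by simp, by simp, rfl⟩ ?_
  rintro r ⟨π, -, hπ₁, hπ₂, rfl⟩
  subst hπ₁ hπ₂
  have hf₁ : Integrable (fun p : E × E => f p.1) π := hfμ.comp_measurable measurable_fst
  have hf₂ : Integrable (fun p : E × E => f p.2) π := hfν.comp_measurable measurable_snd
  rw [integral_map measurable_fst.aemeasurable hfμ.aestronglyMeasurable,
    integral_map measurable_snd.aemeasurable hfν.aestronglyMeasurable, ← integral_sub hf₁ hf₂]
  exact integral_mono (hf₁.sub hf₂) (hc_int π rfl rfl) fun p => hfc p.1 p.2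

end Wasserstein

section L1

variable {d : ℕ}

theorem l1dist_nonneg (y y' : Fin d → ℝ) : 0 ≤ l1dist y y' :=
  Finset.sum_nonneg fun _ _ => abs_nonneg _

theorem sub_le_l1dist (y y' : Fin d → ℝ) (a : Fin d) : y a - y' a ≤ l1dist y y' :=
  (le_abs_self _).trans <|
    Finset.single_le_sum (f := fun b => |y b - y' b|) (fun _ _ => abs_nonneg _) (mem_univ a)

theorem measurable_l1dist : Measurable (Function.uncurry (l1dist (d := d))) := by
  unfold l1dist Function.uncurry
  fun_prop

theorem l1dist_sub_single (y : Fin d → ℝ) (a : Fin d) (δ : ℝ) :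
    l1dist y (y - Pi.single a δ) = |δ| := by
  simp [l1dist, Pi.single_apply, apply_ite]

theorem integrable_l1dist {π : Measure ((Fin d → ℝ) × (Fin d → ℝ))}
    (h₁ : ∀ b, Integrable (fun y => y b) (π.map Prod.fst))
    (h₂ : ∀ b, Integrable (fun y => y b) (π.map Prod.snd)) :
    Integrable (fun p => l1dist p.1 p.2) π :=
  integrable_finsetSum _ fun b _ =>
    (((h₁ b).comp_measurable measurable_fst).sub ((h₂ b).comp_measurable measurable_snd)).abs

theorem measurable_sub_single (a : Fin d) (δ : ℝ) :
    Measurable fun y : Fin d → ℝ => y - Pi.single a δ :=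
  measurable_id.sub_const _

theorem integrable_apply_map_sub_single {μ : Measure (Fin d → ℝ)} [IsFiniteMeasure μ]
    (hμ : ∀ b, Integrable (fun y => y b) μ) (a : Fin d) (δ : ℝ) (b : Fin d) :
    Integrable (fun y => y b) (μ.map fun y => y - Pi.single a δ) :=
  (integrable_map_measure (measurable_pi_apply b).aestronglyMeasurable
    (measurable_sub_single a δ).aemeasurable).2 ((hμ b).sub (integrable_const _))

theorem integral_apply_map_sub_single {μ : Measure (Fin d → ℝ)} [IsProbabilityMeasure μ]
    {a : Fin d} (hμ : Integrable (fun y => y a) μ) (δ : ℝ) :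
    ∫ y, y a ∂(μ.map fun y => y - Pi.single a δ) = (∫ y, y a ∂μ) - δ := by
  rw [integral_map (measurable_sub_single a δ).aemeasurable
    (measurable_pi_apply a).aestronglyMeasurable]
  simp [integral_sub hμ (integrable_const δ)]

theorem W1_l1dist_map_sub_single_le (μ : Measure (Fin d → ℝ)) [IsProbabilityMeasure μ]
    (a : Fin d) (δ : ℝ) : W1 l1dist μ (μ.map fun y => y - Pi.single a δ) ≤ |δ| :=
  (W1_map_le (μ := μ) l1dist_nonneg measurable_l1dist (measurable_sub_single a δ)).trans_eq <| by
    simp [l1dist_sub_single]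

end L1

theorem stmt_2 {d : ℕ} (μ : Measure (Fin d → ℝ)) [IsProbabilityMeasure μ]
    (hμ : ∀ b : Fin d, Integrable (fun y => y b) μ)
    (δ : ℝ) (hδ : 0 ≤ δ) (a : Fin d) :
    sInf {r : ℝ | ∃ ν : Measure (Fin d → ℝ), IsProbabilityMeasure ν ∧
        (∀ b : Fin d, Integrable (fun y => y b) ν) ∧
        W1 l1dist μ ν ≤ δ ∧ (∫ y, y a ∂ν) = r}
      = (∫ y, y a ∂μ) - δ := by
  refine IsLeast.csInf_eq ⟨?_, ?_⟩
  · have hprob := Measure.isProbabilityMeasure_map (μ := μ) (measurable_sub_single a δ).aemeasurable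
    exact ⟨_, hprob, integrable_apply_map_sub_single hμ a δ,
      (W1_l1dist_map_sub_single_le μ a δ).trans_eq (abs_of_nonneg hδ),
      integral_apply_map_sub_single (hμ a) δ⟩
  · rintro r ⟨ν, hν, hνint, hW, rfl⟩
    have hgap := integral_sub_integral_le_W1 (c := l1dist) (hμ a) (hνint a)
      (fun y y' => sub_le_l1dist y y' a)
      fun π hπ₁ hπ₂ => integrable_l1dist (hπ₁ ▸ hμ) (hπ₂ ▸ hνint)
    linarith
end

section
/- Let μ be a probability measure supported on [c, ∞)ᵈ with finite first moments, a ∈ {1,…,d}, m := ∫ y_a dμ, and suppose m − δ ≤ c. Define t : ℝᵈ → ℝᵈ replacing the a-th coordinate with c: t(y)_a = c and t(y)_b = y_b for b ≠ a. Then t_♯μ is supported on [c, ∞)ᵈ, W₁(μ, t_♯μ) = m − c ≤ δ, and ∫ y_a d(t_♯μ) = c. -/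
open MeasureTheory Finset

/-!
Moving every point `y` to `Function.update y a c` only changes the `a`-th coordinate, at
ℓ¹ cost `y a - c ≥ 0`, so this deterministic coupling costs `m - c`. Conversely, since
`|y a - y' a| ≤ ‖y - y'‖₁`, every coupling costs at least the gap between the `a`-th means
of its marginals, which is again `m - c`.
-/

theorem W1_map_eq_of_forall_le {E : Type*} [MeasurableSpace E] {cost : E → E → ℝ}
    (hcost : Measurable (Function.uncurry cost)) {μ : Measure E} [IsProbabilityMeasure μ]
    {f : E → E} (hf : Measurable f)
    (hopt : ∀ π : Measure (E × E), IsProbabilityMeasure π → π.map Prod.fst = μ →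
      π.map Prod.snd = μ.map f → ∫ y, cost y (f y) ∂μ ≤ ∫ p, cost p.1 p.2 ∂π) :
    W1 cost μ (μ.map f) = ∫ y, cost y (f y) ∂μ := by
  have hgraph : Measurable fun y => (y, f y) := measurable_id.prodMk hf
  refine IsLeast.csInf_eq ⟨⟨μ.map fun y => (y, f y), ?_, ?_, ?_, ?_⟩, ?_⟩
  · exact Measure.isProbabilityMeasure_map hgraph.aemeasurable
  · rw [Measure.map_map measurable_fst hgraph, Function.comp_def, Measure.map_id']
  · rw [Measure.map_map measurable_snd hgraph]
    rfl
  · exact integral_map hgraph.aemeasurable hcost.aestronglyMeasurable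
  · rintro r ⟨π, hπ, hfst, hsnd, rfl⟩
    exact hopt π hπ hfst hsnd

section L1

variable {d : ℕ}

theorem abs_sub_le_l1dist (y y' : Fin d → ℝ) (a : Fin d) : |y a - y' a| ≤ l1dist y y' :=
  single_le_sum (f := fun b => |y b - y' b|) (fun _ _ => abs_nonneg _) (mem_univ a)

theorem l1dist_update_right (y : Fin d → ℝ) (a : Fin d) (x : ℝ) :
    l1dist y (Function.update y a x) = |y a - x| := by
  rw [l1dist, sum_eq_single a (fun b _ hb => by simp [hb]) (by simp)]
  simp

theorem integral_sub_integral_le_integral_l1dist {π : Measure ((Fin d → ℝ) × (Fin d → ℝ))}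
    (h₁ : ∀ b, Integrable (fun y => y b) (π.map Prod.fst))
    (h₂ : ∀ b, Integrable (fun y => y b) (π.map Prod.snd)) (a : Fin d) :
    ∫ y, y a ∂(π.map Prod.fst) - ∫ y, y a ∂(π.map Prod.snd) ≤ ∫ p, l1dist p.1 p.2 ∂π := by
  have hint₁ : Integrable (fun p => p.1 a) π := (h₁ a).comp_measurable measurable_fst
  have hint₂ : Integrable (fun p => p.2 a) π := (h₂ a).comp_measurable measurable_snd
  rw [integral_map (f := fun y : Fin d → ℝ => y a) measurable_fst.aemeasurable
      (measurable_pi_apply a).aestronglyMeasurable,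
    integral_map (f := fun y : Fin d → ℝ => y a) measurable_snd.aemeasurable
      (measurable_pi_apply a).aestronglyMeasurable, ← integral_sub hint₁ hint₂]
  exact integral_mono (hint₁.sub hint₂) (integrable_l1dist h₁ h₂)
    fun p => (le_abs_self _).trans (abs_sub_le_l1dist p.1 p.2 a)

end L1

section Update

variable {d : ℕ} {μ : Measure (Fin d → ℝ)}

theorem integrable_apply_map_update (hμ : ∀ b, Integrable (fun y => y b) μ) [IsFiniteMeasure μ]
    (a : Fin d) (x : ℝ) (b : Fin d) :
    Integrable (fun y => y b) (μ.map (Function.update · a x)) := by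
  rw [integrable_map_measure (g := fun y : Fin d → ℝ => y b)
    (measurable_pi_apply b).aestronglyMeasurable measurable_update_left.aemeasurable]
  by_cases hb : b = a
  · subst hb
    simp [Function.comp_def]
  · simpa [Function.comp_def, hb] using hμ b

theorem integral_apply_map_update_self [IsProbabilityMeasure μ] (a : Fin d) (x : ℝ) :
    ∫ y, y a ∂(μ.map (Function.update · a x)) = x := by
  rw [integral_map (f := fun y : Fin d → ℝ => y a) measurable_update_left.aemeasurable
    (measurable_pi_apply a).aestronglyMeasurable]
  simp

theorem ae_forall_le_map_update {c : ℝ} (hsupp : ∀ᵐ y ∂μ, ∀ i, c ≤ y i) (a : Fin d) {x : ℝ}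
    (hx : c ≤ x) : ∀ᵐ y ∂(μ.map (Function.update · a x)), ∀ i, c ≤ y i := by
  have hset : MeasurableSet {y : Fin d → ℝ | ∀ i, c ≤ y i} := measurableSet_Ici (a := fun _ => c)
  rw [ae_map_iff measurable_update_left.aemeasurable hset]
  filter_upwards [hsupp] with y hy i
  by_cases hi : i = a <;> simp [hi, hx, hy i]

end Update

theorem stmt_6 {d : ℕ} (μ : Measure (Fin d → ℝ)) [IsProbabilityMeasure μ]
    (hμ : ∀ b : Fin d, Integrable (fun y => y b) μ)
    (c : ℝ) (hsupp : ∀ᵐ y ∂μ, ∀ i, c ≤ y i)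
    (a : Fin d) (m : ℝ) (hm : m = ∫ y, y a ∂μ)
    (δ : ℝ) (hδ : m - δ ≤ c)
    (t : (Fin d → ℝ) → (Fin d → ℝ))
    (ht : t = fun y i => if i = a then c else y i) :
    (∀ᵐ y ∂(μ.map t), ∀ i, c ≤ y i) ∧
      W1 l1dist μ (μ.map t) = m - c ∧ m - c ≤ δ ∧
      (∫ y, y a ∂(μ.map t)) = c := by
  obtain rfl : t = (Function.update · a c) := by
    ext y i
    simp [ht, Function.update_apply]
  have hcost : ∫ y, l1dist y (Function.update y a c) ∂μ = m - c := by
    have hpt : ∀ᵐ y ∂μ, l1dist y (Function.update y a c) = y a - c := by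
      filter_upwards [hsupp] with y hy
      rw [l1dist_update_right, abs_of_nonneg (sub_nonneg.mpr (hy a))]
    rw [integral_congr_ae hpt, integral_sub (hμ a) (integrable_const c), hm]
    simp
  refine ⟨?_, ?_, by linarith, integral_apply_map_update_self a c⟩
  · exact ae_forall_le_map_update hsupp a le_rfl
  · rw [W1_map_eq_of_forall_le measurable_l1dist measurable_update_left, hcost]
    intro π _ hfst hsnd
    have := integral_sub_integral_le_integral_l1dist (π := π) (hfst ▸ hμ)
      (hsnd ▸ integrable_apply_map_update hμ a c) a
    rwa [hfst, hsnd, integral_apply_map_update_self, ← hm, ← hcost] at this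
end
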